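/- Let H₁, H₂ be Hilbert spaces, (aᵢ)ᵢ a sequence of pairwise orthogonal projections on H₁, and (bᵢ)ᵢ a sequence of pairwise orthogonal projections on H₂. Let s ∈ B(H₁, H₂) be a bounded operator, and suppose aᵢ s* bᵢ s aᵢ = aᵢ for all i. If p = ⋁ᵢ aᵢ (the projection onto the closed span of the ranges) and s₀ = Σᵢ bᵢ s aᵢ converges in the strong operator topology, then s₀* s₀ = p. -/

import Mathlib

/-!
Pair both sides with vectors: `⟪ξ, s₀* s₀ η⟫ = Σⱼ ⟪s₀ ξ, bⱼ s aⱼ η⟫` and `⟪ξ, p η⟫ = Σⱼ ⟪ξ, aⱼ η⟫`.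
Since the `bᵢ` are mutually orthogonal, `bⱼ s₀ ξ = bⱼ s aⱼ ξ`, so the cross terms drop out and the
`j`-th term of the first sum is `⟪bⱼ s aⱼ ξ, s aⱼ η⟫ = ⟪ξ, aⱼ s* bⱼ s aⱼ η⟫ = ⟪ξ, aⱼ η⟫`.
-/

open ContinuousLinearMap
open scoped InnerProductSpace

theorem ContinuousLinearMap.apply_eq_of_hasSum_orthogonal {ι R M : Type*} [Semiring R]
    [AddCommMonoid M] [TopologicalSpace M] [T2Space M] [Module R M]
    (b : ι → M →L[R] M) (hb_idem : ∀ i, b i ∘L b i = b i)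
    (hb_orth : ∀ i j, i ≠ j → b i ∘L b j = 0)
    {x : ι → M} {y : M} (hy : HasSum (fun i => b i (x i)) y) (j : ι) :
    b j y = b j (x j) := by
  refine (hy.mapL (b j)).unique (hasSum_single j fun i hij => ?_) |>.trans ?_
  · simpa using congr($(hb_orth j i (Ne.symm hij)) (x i))
  · simpa using congr($(hb_idem j) (x j))

theorem ContinuousLinearMap.inner_apply_comp_eq_of_comp_adjoint_comp_eq {𝕜 E F : Type*}
    [RCLike 𝕜] [NormedAddCommGroup E] [InnerProductSpace 𝕜 E] [CompleteSpace E]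
    [NormedAddCommGroup F] [InnerProductSpace 𝕜 F] [CompleteSpace F]
    {a : E →L[𝕜] E} {b : F →L[𝕜] F} (ha : IsSelfAdjoint a) (hb : IsSelfAdjoint b)
    {s : E →L[𝕜] F} (h : a ∘L adjoint s ∘L b ∘L s ∘L a = a) (ξ η : E) :
    ⟪b (s (a ξ)), s (a η)⟫_𝕜 = ⟪ξ, a η⟫_𝕜 := by
  rw [← adjoint_inner_right, hb.adjoint_eq, ← adjoint_inner_right, ← adjoint_inner_right,
    ha.adjoint_eq]
  simpa using congr(⟪ξ, $h η⟫_𝕜)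

theorem stmt_11_general {H₁ H₂ : Type*}
    [NormedAddCommGroup H₁] [InnerProductSpace ℂ H₁] [CompleteSpace H₁]
    [NormedAddCommGroup H₂] [InnerProductSpace ℂ H₂] [CompleteSpace H₂]
    (a : ℕ → H₁ →L[ℂ] H₁) (b : ℕ → H₂ →L[ℂ] H₂)
    (ha_sa : ∀ i, IsSelfAdjoint (a i))
    (hb_sa : ∀ i, IsSelfAdjoint (b i)) (hb_idem : ∀ i, b i ∘L b i = b i)
    (hb_orth : ∀ i j, i ≠ j → b i ∘L b j = 0)
    (s : H₁ →L[ℂ] H₂)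
    (hmid : ∀ i, a i ∘L adjoint s ∘L b i ∘L s ∘L a i = a i)
    (p : H₁ →L[ℂ] H₁) (hp : ∀ ξ : H₁, HasSum (fun i => a i ξ) (p ξ))
    (s₀ : H₁ →L[ℂ] H₂) (hs₀ : ∀ ξ : H₁, HasSum (fun i => b i (s (a i ξ))) (s₀ ξ)) :
    adjoint s₀ ∘L s₀ = p := by
  ext η
  refine ext_inner_left ℂ fun ξ => ?_
  rw [comp_apply, adjoint_inner_right]
  have hterm (j : ℕ) : ⟪s₀ ξ, b j (s (a j η))⟫_ℂ = ⟪ξ, a j η⟫_ℂ := by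
    rw [← adjoint_inner_left, (hb_sa j).adjoint_eq,
      apply_eq_of_hasSum_orthogonal b hb_idem hb_orth (hs₀ ξ),
      inner_apply_comp_eq_of_comp_adjoint_comp_eq (ha_sa j) (hb_sa j) (hmid j)]
  refine HasSum.unique ?_ ((hp η).mapL (innerSL ℂ ξ))
  simpa [hterm] using (hs₀ η).mapL (innerSL ℂ (s₀ ξ))

/-- Let `(aᵢ)` and `(bᵢ)` be sequences of pairwise orthogonal (orthogonal) projections on
Hilbert spaces `H₁` and `H₂` respectively, and `s : H₁ → H₂` bounded with
`aᵢ s* bᵢ s aᵢ = aᵢ` for all `i`.  If `p` is the strong sum `Σᵢ aᵢ` (the projection onto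
the closed span of the ranges) and `s₀` is the strong sum `Σᵢ bᵢ s aᵢ`, then
`s₀* s₀ = p`. -/
theorem stmt_11 {H₁ H₂ : Type*}
    [NormedAddCommGroup H₁] [InnerProductSpace ℂ H₁] [CompleteSpace H₁]
    [NormedAddCommGroup H₂] [InnerProductSpace ℂ H₂] [CompleteSpace H₂]
    (a : ℕ → H₁ →L[ℂ] H₁) (b : ℕ → H₂ →L[ℂ] H₂)
    (ha_sa : ∀ i, IsSelfAdjoint (a i)) (ha_idem : ∀ i, a i ∘L a i = a i)
    (ha_orth : ∀ i j, i ≠ j → a i ∘L a j = 0)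
    (hb_sa : ∀ i, IsSelfAdjoint (b i)) (hb_idem : ∀ i, b i ∘L b i = b i)
    (hb_orth : ∀ i j, i ≠ j → b i ∘L b j = 0)
    (s : H₁ →L[ℂ] H₂)
    (hmid : ∀ i, a i ∘L adjoint s ∘L b i ∘L s ∘L a i = a i)
    (p : H₁ →L[ℂ] H₁) (hp : ∀ ξ : H₁, HasSum (fun i => a i ξ) (p ξ))
    (s₀ : H₁ →L[ℂ] H₂) (hs₀ : ∀ ξ : H₁, HasSum (fun i => b i (s (a i ξ))) (s₀ ξ)) :
    adjoint s₀ ∘L s₀ = p :=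
  stmt_11_general a b ha_sa hb_sa hb_idem hb_orth s hmid p hp s₀ hs₀
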